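/- arXiv:2110.13645 — 2 statements merged into one kernel-verified Lean document; each statement's English description precedes it below -/
import Mathlib

section
/- For every n ≡ 2 (mod 4) with n ≥ 2, the diameter of the balanced shuffle-cube BSQ_n equals n. -/
def bitOf {n : ℕ} (u : Fin n → Bool) (i : ℕ) : Bool :=
  if h : i < n then u ⟨i, h⟩ else false

def lowRel {n : ℕ} (u v : Fin n → Bool) : Prop :=
  ∃ i < 2, bitOf u i ≠ bitOf v i ∧ ∀ k, k ≠ i → bitOf u k = bitOf v k

def blockAgree {n : ℕ} (u v : Fin n → Bool) (j : ℕ) : Prop :=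
  ∀ k, (k < 4*j - 2 ∨ 4*j + 1 < k) → bitOf u k = bitOf v k

/-- The pair of bits `u_{i+1} u_i` read as an integer in `{0,1,2,3}` (an element of `ZMod 4`). -/
def pairVal {n : ℕ} (u : Fin n → Bool) (i : ℕ) : ZMod 4 :=
  ((2 * (bitOf u (i+1)).toNat + (bitOf u i).toNat : ℕ) : ZMod 4)

def bsqRel {n : ℕ} (u v : Fin n → Bool) : Prop :=
  lowRel u v ∨ ∃ j, 1 ≤ j ∧ j ≤ (n-2)/4 ∧ blockAgree u v j ∧
    (pairVal v (4*j) = pairVal u (4*j) + 1 ∨ pairVal v (4*j) = pairVal u (4*j) - 1) ∧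
    (pairVal v (4*j-2) = pairVal u (4*j-2) + (if bitOf u (4*j) then -1 else 1) ∨
      pairVal v (4*j-2) = pairVal u (4*j-2))

/-- The `n`-dimensional balanced shuffle-cube `BSQ_n`. -/
def BSQ (n : ℕ) : SimpleGraph (Fin n → Bool) := SimpleGraph.fromRel bsqRel

/-! ### Auxiliary finite block-graph facts -/

namespace BSQaux

abbrev S := ZMod 4 × ZMod 4

def eps (a : ZMod 4) : ZMod 4 := if a.val % 2 = 1 then -1 else 1

def brel (x y : S) : Prop :=
  (y.1 = x.1 + 1 ∨ y.1 = x.1 - 1) ∧ (y.2 = x.2 + eps x.1 ∨ y.2 = x.2)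

instance (x y : S) : Decidable (brel x y) := by unfold brel eps; infer_instance

def Badj (x y : S) : Prop := x ≠ y ∧ (brel x y ∨ brel y x)

instance (x y : S) : Decidable (Badj x y) := by unfold Badj; infer_instance

/-- Distance from `(0,0)` in the 16-vertex block graph. -/
def ftab (x : S) : ℕ :=
  [0,2,4,2,1,1,3,3,2,2,4,2,1,1,3,3].getD (x.1.val*4+x.2.val) 0

lemma ftab00 : ftab (0,0) = 0 := by decide
lemma ftab22 : ftab (2,2) = 4 := by decide
lemma ftabLip : ∀ x y : S, Badj x y → ftab y ≤ ftab x + 1 := by decide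

def reachN : ℕ → S → S → Prop
  | 0, x, y => x = y
  | (k+1), x, y => reachN k x y ∨ ∃ z, Badj x z ∧ reachN k z y

instance instReach : ∀ (k : ℕ) (x y : S), Decidable (reachN k x y)
  | 0, x, y => by unfold reachN; infer_instance
  | (k+1), x, y => by
      unfold reachN
      haveI : ∀ x y, Decidable (reachN k x y) := instReach k
      infer_instance

lemma reachN_trans : ∀ (k l : ℕ) (x y z : S),
    reachN k x z → reachN l z y → reachN (k+l) x y := by
  intro k
  induction k with
  | zero => intro l x y z h1 h2; rw [show reachN 0 x z = (x = z) from rfl] at h1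
            subst h1; rwa [Nat.zero_add]
  | succ k ih =>
      intro l x y z h1 h2
      rw [show reachN (k+1) x z = (reachN k x z ∨ ∃ w, Badj x w ∧ reachN k w z) from rfl] at h1
      rw [show k+1+l = (k+l)+1 by omega]
      rcases h1 with h1 | ⟨w, hb, hr⟩
      · exact Or.inl (ih l x y z h1 h2)
      · exact Or.inr ⟨w, hb, ih l w y z hr h2⟩

set_option maxRecDepth 4000 in
lemma reach2comp : ∀ x y : S, ∃ z, reachN 2 x z ∧ reachN 2 z y := by decide

lemma reach4 : ∀ x y : S, reachN 4 x y := by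
  intro x y
  obtain ⟨z, h1, h2⟩ := reach2comp x y
  have := reachN_trans 2 2 x y z h1 h2
  exact this

/-! ### Encoding/decoding pairs of bits -/

def boolHi (a : ZMod 4) : Bool := decide (2 ≤ a.val)
def boolLo (a : ZMod 4) : Bool := decide (a.val % 2 = 1)

lemma enc_boolHi : ∀ hi lo : Bool, boolHi (((2 * hi.toNat + lo.toNat : ℕ) : ZMod 4)) = hi := by
  decide
lemma enc_boolLo : ∀ hi lo : Bool, boolLo (((2 * hi.toNat + lo.toNat : ℕ) : ZMod 4)) = lo := by
  decide
lemma enc_dec : ∀ a : ZMod 4, ((2 * (boolHi a).toNat + (boolLo a).toNat : ℕ) : ZMod 4) = a := by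
  decide
lemma eps_eq : ∀ a : ZMod 4, (if boolLo a then (-1 : ZMod 4) else 1) = eps a := by decide
lemma enc_inj : ∀ b1 c1 b2 c2 : Bool,
    ((2 * b1.toNat + c1.toNat : ℕ) : ZMod 4) = ((2 * b2.toNat + c2.toNat : ℕ) : ZMod 4) →
    b1 = b2 ∧ c1 = c2 := by decide

lemma bitOf_fin {n : ℕ} (u : Fin n → Bool) (i : Fin n) : bitOf u (i : ℕ) = u i := by
  simp [bitOf, i.isLt]

lemma bitOf_ge {n : ℕ} (u : Fin n → Bool) {k : ℕ} (h : n ≤ k) : bitOf u k = false := by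
  simp [bitOf, Nat.not_lt.mpr h]

lemma pairVal_congr {n : ℕ} {u v : Fin n → Bool} {p : ℕ}
    (h1 : bitOf u p = bitOf v p) (h2 : bitOf u (p+1) = bitOf v (p+1)) :
    pairVal u p = pairVal v p := by
  simp [pairVal, h1, h2]

/-! ### Block states and writing a block -/

def blockState {n : ℕ} (u : Fin n → Bool) (j : ℕ) : S :=
  (pairVal u (4*j), pairVal u (4*j-2))

def writeBlock {n : ℕ} (u : Fin n → Bool) (j : ℕ) (s : S) : Fin n → Bool :=
  fun i => if (i : ℕ) = 4*j+1 then boolHi s.1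
    else if (i : ℕ) = 4*j then boolLo s.1
    else if (i : ℕ) = 4*j-1 then boolHi s.2
    else if (i : ℕ) = 4*j-2 then boolLo s.2
    else u i

lemma bitOf_writeBlock_out {n : ℕ} (u : Fin n → Bool) (j : ℕ) (s : S) {k : ℕ}
    (h1 : k ≠ 4*j+1) (h2 : k ≠ 4*j) (h3 : k ≠ 4*j-1) (h4 : k ≠ 4*j-2) :
    bitOf (writeBlock u j s) k = bitOf u k := by
  unfold bitOf writeBlock
  split
  · simp [h1, h2, h3, h4]
  · rfl

lemma bitOf_writeBlock_hi1 {n : ℕ} (u : Fin n → Bool) (j : ℕ) (s : S)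
    (h : 4*j+1 < n) : bitOf (writeBlock u j s) (4*j+1) = boolHi s.1 := by
  unfold bitOf writeBlock
  rw [dif_pos h]; simp

lemma bitOf_writeBlock_lo1 {n : ℕ} (u : Fin n → Bool) (j : ℕ) (s : S)
    (h : 4*j < n) : bitOf (writeBlock u j s) (4*j) = boolLo s.1 := by
  unfold bitOf writeBlock
  rw [dif_pos h]
  have : 4*j ≠ 4*j+1 := by omega
  simp [this]

lemma bitOf_writeBlock_hi2 {n : ℕ} (u : Fin n → Bool) (j : ℕ) (s : S)
    (hj : 1 ≤ j) (h : 4*j-1 < n) : bitOf (writeBlock u j s) (4*j-1) = boolHi s.2 := by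
  unfold bitOf writeBlock
  rw [dif_pos h]
  have h1 : 4*j-1 ≠ 4*j+1 := by omega
  have h2 : 4*j-1 ≠ 4*j := by omega
  simp [h1, h2]

lemma bitOf_writeBlock_lo2 {n : ℕ} (u : Fin n → Bool) (j : ℕ) (s : S)
    (hj : 1 ≤ j) (h : 4*j-2 < n) : bitOf (writeBlock u j s) (4*j-2) = boolLo s.2 := by
  unfold bitOf writeBlock
  rw [dif_pos h]
  have h1 : 4*j-2 ≠ 4*j+1 := by omega
  have h2 : 4*j-2 ≠ 4*j := by omega
  have h3 : 4*j-2 ≠ 4*j-1 := by omega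
  simp [h1, h2, h3]

lemma pairVal_writeBlock_fst {n : ℕ} (u : Fin n → Bool) (j : ℕ) (s : S)
    (hn : 4*j+1 < n) : pairVal (writeBlock u j s) (4*j) = s.1 := by
  unfold pairVal
  rw [bitOf_writeBlock_hi1 u j s hn, bitOf_writeBlock_lo1 u j s (by omega)]
  exact enc_dec s.1

lemma pairVal_writeBlock_snd {n : ℕ} (u : Fin n → Bool) (j : ℕ) (s : S)
    (hj : 1 ≤ j) (hn : 4*j-1 < n) : pairVal (writeBlock u j s) (4*j-2) = s.2 := by
  unfold pairVal
  have e : 4*j-2+1 = 4*j-1 := by omega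
  rw [e, bitOf_writeBlock_hi2 u j s hj hn, bitOf_writeBlock_lo2 u j s hj (by omega)]
  exact enc_dec s.2

lemma blockState_writeBlock_self {n : ℕ} (u : Fin n → Bool) (j : ℕ) (s : S)
    (hj : 1 ≤ j) (hn : 4*j+1 < n) : blockState (writeBlock u j s) j = s := by
  unfold blockState
  rw [pairVal_writeBlock_fst u j s hn, pairVal_writeBlock_snd u j s hj (by omega)]

lemma writeBlock_self {n : ℕ} (u : Fin n → Bool) (j : ℕ)
    (hj : 1 ≤ j) (hn : 4*j+1 < n) : writeBlock u j (blockState u j) = u := by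
  funext i
  have hb : ∀ (k : ℕ) (hk : k < n), (⟨k, hk⟩ : Fin n) = i → bitOf u k = u i := by
    intro k hk he; rw [← he]; exact bitOf_fin u ⟨k, hk⟩
  unfold writeBlock blockState
  split_ifs with e1 e2 e3 e4
  · show boolHi (pairVal u (4*j)) = u i
    unfold pairVal; rw [enc_boolHi]
    exact hb _ (by omega) (by ext; simp [← e1])
  · show boolLo (pairVal u (4*j)) = u i
    unfold pairVal; rw [enc_boolLo]
    exact hb _ (by omega) (by ext; simp [← e2])
  · show boolHi (pairVal u (4*j-2)) = u i
    unfold pairVal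
    have e : 4*j-2+1 = 4*j-1 := by omega
    rw [e, enc_boolHi]
    exact hb _ (by omega) (by ext; simp [← e3])
  · show boolLo (pairVal u (4*j-2)) = u i
    unfold pairVal; rw [enc_boolLo]
    exact hb _ (by omega) (by ext; simp [← e4])
  · rfl

lemma writeBlock_writeBlock {n : ℕ} (u : Fin n → Bool) (j : ℕ) (s t : S) :
    writeBlock (writeBlock u j s) j t = writeBlock u j t := by
  funext i
  unfold writeBlock
  split_ifs <;> rfl

lemma blockState_writeBlock_ne {n : ℕ} (u : Fin n → Bool) {j j' : ℕ} (s : S)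
    (hj : 1 ≤ j) (hj' : 1 ≤ j') (hne : j ≠ j') :
    blockState (writeBlock u j s) j' = blockState u j' := by
  unfold blockState
  have e : 4*j'-2+1 = 4*j'-1 := by omega
  rw [Prod.mk.injEq]
  constructor
  · unfold pairVal
    rw [bitOf_writeBlock_out u j s (by omega) (by omega) (by omega) (by omega),
        bitOf_writeBlock_out u j s (by omega) (by omega) (by omega) (by omega)]
  · unfold pairVal
    rw [e, bitOf_writeBlock_out u j s (by omega) (by omega) (by omega) (by omega),
        bitOf_writeBlock_out u j s (by omega) (by omega) (by omega) (by omega)]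

end BSQaux

namespace BSQaux

lemma div_eq {n m : ℕ} (hm : n = 4*m+2) : (n-2)/4 = m := by omega

lemma lift_rel {n m : ℕ} (hm : n = 4*m+2) {j : ℕ} (hj : 1 ≤ j) (hjm : j ≤ m)
    (u : Fin n → Bool) {s t : S} (h : brel s t) :
    bsqRel (writeBlock u j s) (writeBlock u j t) := by
  have hn1 : 4*j+1 < n := by omega
  refine Or.inr ⟨j, hj, by rw [div_eq hm]; exact hjm, ?_, ?_, ?_⟩
  · intro k hk
    rw [bitOf_writeBlock_out u j s (by omega) (by omega) (by omega) (by omega),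
        bitOf_writeBlock_out u j t (by omega) (by omega) (by omega) (by omega)]
  · rw [pairVal_writeBlock_fst u j s hn1, pairVal_writeBlock_fst u j t hn1]
    exact h.1
  · rw [pairVal_writeBlock_snd u j s hj (by omega), pairVal_writeBlock_snd u j t hj (by omega),
        bitOf_writeBlock_lo1 u j s (by omega), eps_eq]
    exact h.2

lemma writeBlock_inj {n m : ℕ} (hm : n = 4*m+2) {j : ℕ} (hj : 1 ≤ j) (hjm : j ≤ m)
    (u : Fin n → Bool) {s t : S} (h : writeBlock u j s = writeBlock u j t) : s = t := by
  have hn1 : 4*j+1 < n := by omega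
  have h1 := blockState_writeBlock_self u j s hj hn1
  have h2 := blockState_writeBlock_self u j t hj hn1
  rw [← h1, ← h2, h]

lemma lift_adj {n m : ℕ} (hm : n = 4*m+2) {j : ℕ} (hj : 1 ≤ j) (hjm : j ≤ m)
    (u : Fin n → Bool) {s t : S} (h : Badj s t) :
    (BSQ n).Adj (writeBlock u j s) (writeBlock u j t) := by
  rw [BSQ, SimpleGraph.fromRel_adj]
  refine ⟨fun he => h.1 (writeBlock_inj hm hj hjm u he), ?_⟩
  rcases h.2 with h' | h'
  · exact Or.inl (lift_rel hm hj hjm u h')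
  · exact Or.inr (lift_rel hm hj hjm u h')

lemma walk_of_reach {n m : ℕ} (hm : n = 4*m+2) {j : ℕ} (hj : 1 ≤ j) (hjm : j ≤ m) :
    ∀ (k : ℕ) (s t : S), reachN k s t → ∀ u : Fin n → Bool,
      ∃ w : (BSQ n).Walk (writeBlock u j s) (writeBlock u j t), w.length ≤ k := by
  intro k
  induction k with
  | zero =>
      intro s t h u
      rw [show reachN 0 s t = (s = t) from rfl] at h
      subst h
      exact ⟨SimpleGraph.Walk.nil, by simp⟩
  | succ k ih =>
      intro s t h u
      rw [show reachN (k+1) s t = (reachN k s t ∨ ∃ z, Badj s z ∧ reachN k z t) from rfl] at h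
      rcases h with h | ⟨z, hb, hr⟩
      · obtain ⟨w, hw⟩ := ih s t h u
        exact ⟨w, hw.trans (by omega)⟩
      · have e : (BSQ n).Adj (writeBlock u j s) (writeBlock u j z) := lift_adj hm hj hjm u hb
        obtain ⟨w, hw⟩ := ih z t hr (writeBlock u j z)
        refine ⟨SimpleGraph.Walk.cons e
          (w.copy (writeBlock_writeBlock u j z z) (writeBlock_writeBlock u j z t)), ?_⟩
        rw [SimpleGraph.Walk.length_cons, SimpleGraph.Walk.length_copy]; omega

/-! ### Low-bit walks -/

lemma low_adj {n : ℕ} {u v : Fin n → Bool} (i : ℕ) (hi : i < 2)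
    (hne : bitOf u i ≠ bitOf v i) (hrest : ∀ k, k ≠ i → bitOf u k = bitOf v k) :
    (BSQ n).Adj u v := by
  rw [BSQ, SimpleGraph.fromRel_adj]
  refine ⟨fun he => hne (by rw [he]), Or.inl (Or.inl ⟨i, hi, hne, hrest⟩)⟩

lemma eq_of_bitOf {n : ℕ} {u v : Fin n → Bool} (h : ∀ k, bitOf u k = bitOf v k) : u = v := by
  funext i
  rw [← bitOf_fin u i, ← bitOf_fin v i]
  exact h i

lemma walk_low {n : ℕ} (hn2 : 2 ≤ n) {u v : Fin n → Bool}
    (hlow : ∀ k, 2 ≤ k → bitOf u k = bitOf v k) :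
    ∃ w : (BSQ n).Walk u v, w.length ≤ 2 := by
  by_cases h0 : bitOf u 0 = bitOf v 0 <;> by_cases h1 : bitOf u 1 = bitOf v 1
  · have : u = v := by
      apply eq_of_bitOf
      intro k
      match k with
      | 0 => exact h0
      | 1 => exact h1
      | (k+2) => exact hlow (k+2) (by omega)
    subst this
    exact ⟨SimpleGraph.Walk.nil, by simp⟩
  · refine ⟨SimpleGraph.Walk.cons (low_adj 1 (by omega) h1 ?_) SimpleGraph.Walk.nil, by simp⟩
    intro k hk
    match k with
    | 0 => exact h0
    | 1 => exact absurd rfl hk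
    | (k+2) => exact hlow (k+2) (by omega)
  · refine ⟨SimpleGraph.Walk.cons (low_adj 0 (by omega) h0 ?_) SimpleGraph.Walk.nil, by simp⟩
    intro k hk
    match k with
    | 0 => exact absurd rfl hk
    | 1 => exact h1
    | (k+2) => exact hlow (k+2) (by omega)
  · set mid : Fin n → Bool := fun i => if (i : ℕ) = 0 then v i else u i with hmid
    have h0n : 0 < n := by omega
    have hm0 : bitOf mid 0 = bitOf v 0 := by
      unfold bitOf
      rw [dif_pos h0n, dif_pos h0n]
      simp [hmid]
    have hmk : ∀ k, k ≠ 0 → bitOf mid k = bitOf u k := by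
      intro k hk
      unfold bitOf
      split
      · simp [hmid, hk]
      · rfl
    have e1 : (BSQ n).Adj u mid := by
      refine low_adj 0 (by omega) (by rw [hm0]; exact h0) ?_
      intro k hk; exact (hmk k hk).symm
    have e2 : (BSQ n).Adj mid v := by
      refine low_adj 1 (by omega) ?_ ?_
      · rw [hmk 1 (by omega)]; exact h1
      · intro k hk
        match k with
        | 0 => exact hm0
        | 1 => exact absurd rfl hk
        | (k+2) => rw [hmk (k+2) (by omega)]; exact hlow (k+2) (by omega)
    exact ⟨SimpleGraph.Walk.cons e1 (SimpleGraph.Walk.cons e2 SimpleGraph.Walk.nil), by simp⟩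

/-- recover single-bit equality from pairVal equality -/
lemma bits_of_pairVal {n : ℕ} {u v : Fin n → Bool} {p : ℕ} (h : pairVal u p = pairVal v p) :
    bitOf u p = bitOf v p ∧ bitOf u (p+1) = bitOf v (p+1) := by
  unfold pairVal at h
  have := enc_inj _ _ _ _ h
  exact ⟨this.2, this.1⟩

/-- If all block states agree, then all bits of index `≥ 2` agree. -/
lemma high_bits_of_blockState {n m : ℕ} (hm : n = 4*m+2) {u v : Fin n → Bool}
    (h : ∀ j, 1 ≤ j → j ≤ m → blockState u j = blockState v j) :
    ∀ k, 2 ≤ k → bitOf u k = bitOf v k := by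
  intro k hk
  by_cases hkn : k < n
  · set j := (k+2)/4 with hj
    have hj1 : 1 ≤ j := by omega
    have hjm : j ≤ m := by omega
    have hb := h j hj1 hjm
    have hb1 : pairVal u (4*j) = pairVal v (4*j) := congrArg Prod.fst hb
    have hb2 : pairVal u (4*j-2) = pairVal v (4*j-2) := congrArg Prod.snd hb
    have e : 4*j-2+1 = 4*j-1 := by omega
    have c1 := bits_of_pairVal hb1
    have c2 := bits_of_pairVal hb2
    rw [e] at c2
    have hc : k = 4*j-2 ∨ k = 4*j-1 ∨ k = 4*j ∨ k = 4*j+1 := by omega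
    rcases hc with hk4 | hk4 | hk4 | hk4 <;> rw [hk4]
    exacts [c2.1, c2.2, c1.1, c1.2]
  · rw [bitOf_ge u (by omega), bitOf_ge v (by omega)]

/-- Main upper bound, by induction on the number of blocks. -/
lemma upper {n m : ℕ} (hm : n = 4*m+2) :
    ∀ (k : ℕ) (u v : Fin n → Bool),
      (∀ j, 1 ≤ j → j ≤ m → k < j → blockState u j = blockState v j) →
      ∃ w : (BSQ n).Walk u v, w.length ≤ 2 + 4*k := by
  intro k
  induction k with
  | zero =>
      intro u v h
      exact walk_low (by omega) (high_bits_of_blockState hm (fun j hj1 hjm => h j hj1 hjm hj1))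
  | succ k ih =>
      intro u v h
      by_cases hk : k+1 ≤ m
      · have hn1 : 4*(k+1)+1 < n := by omega
        obtain ⟨w1, hw1⟩ := walk_of_reach hm (j := k+1) (by omega) hk 4
          (blockState u (k+1)) (blockState v (k+1)) (reach4 _ _) u
        have hhyp : ∀ j, 1 ≤ j → j ≤ m → k < j →
            blockState (writeBlock u (k+1) (blockState v (k+1))) j = blockState v j := by
          intro j hj1 hjm hkj
          by_cases hjk : j = k+1
          · subst hjk
            rw [blockState_writeBlock_self u (k+1) _ (by omega) hn1]
          · rw [blockState_writeBlock_ne u _ (by omega) hj1 (fun he => hjk he.symm)]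
            exact h j hj1 hjm (by omega)
        obtain ⟨w2, hw2⟩ := ih (writeBlock u (k+1) (blockState v (k+1))) v hhyp
        refine ⟨(w1.copy (writeBlock_self u (k+1) (by omega) hn1) rfl).append w2, ?_⟩
        rw [SimpleGraph.Walk.length_append, SimpleGraph.Walk.length_copy]
        omega
      · have hhyp : ∀ j, 1 ≤ j → j ≤ m → k < j → blockState u j = blockState v j := by
          intro j hj1 hjm hkj
          exact h j hj1 hjm (by omega)
        obtain ⟨w, hw⟩ := ih u v hhyp
        exact ⟨w, hw.trans (by omega)⟩

end BSQaux

namespace BSQaux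

def Phi {n : ℕ} (m : ℕ) (u : Fin n → Bool) : ℕ :=
  (bitOf u 0).toNat + (bitOf u 1).toNat + ∑ i ∈ Finset.range m, ftab (blockState u (i+1))

lemma toNat_le (b : Bool) : b.toNat ≤ 1 := by cases b <;> simp

lemma sum_lip {m : ℕ} {g g' : ℕ → ℕ} {i0 : ℕ} (hi0 : i0 ∈ Finset.range m)
    (h1 : g' i0 ≤ g i0 + 1) (h2 : ∀ i ∈ Finset.range m, i ≠ i0 → g' i = g i) :
    ∑ i ∈ Finset.range m, g' i ≤ (∑ i ∈ Finset.range m, g i) + 1 := by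
  calc ∑ i ∈ Finset.range m, g' i
      ≤ ∑ i ∈ Finset.range m, (g i + if i = i0 then 1 else 0) := by
        refine Finset.sum_le_sum ?_
        intro i hi
        by_cases h : i = i0
        · subst h; simpa using h1
        · rw [h2 i hi h]; simp [h]
    _ = (∑ i ∈ Finset.range m, g i) + 1 := by
        rw [Finset.sum_add_distrib, Finset.sum_ite_eq' (Finset.range m) i0 (fun _ => 1)]
        simp [hi0]

lemma phi_rel {n m : ℕ} (hm : n = 4*m+2) {u v : Fin n → Bool} (h : bsqRel u v) :
    Phi m v ≤ Phi m u + 1 ∧ Phi m u ≤ Phi m v + 1 := by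
  rcases h with ⟨i, hi, hne, hrest⟩ | ⟨j, hj1, hjm', hagree, hA, hB⟩
  · have hsum : (∑ x ∈ Finset.range m, ftab (blockState v (x+1)))
        = ∑ x ∈ Finset.range m, ftab (blockState u (x+1)) := by
      refine Finset.sum_congr rfl ?_
      intro x _
      congr 1
      unfold blockState
      have e : 4*(x+1)-2+1 = 4*(x+1)-1 := by omega
      rw [Prod.mk.injEq]
      constructor
      · exact (pairVal_congr (hrest _ (by omega)) (hrest _ (by omega))).symm
      · unfold pairVal
        rw [e, hrest _ (by omega), hrest _ (by omega)]
    interval_cases i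
    · have e1 : bitOf v 1 = bitOf u 1 := (hrest 1 (by omega)).symm
      unfold Phi
      rw [hsum, e1]
      have t0 := toNat_le (bitOf u 0); have t0' := toNat_le (bitOf v 0)
      omega
    · have e0 : bitOf v 0 = bitOf u 0 := (hrest 0 (by omega)).symm
      unfold Phi
      rw [hsum, e0]
      have t1 := toNat_le (bitOf u 1); have t1' := toNat_le (bitOf v 1)
      omega
  · rw [div_eq hm] at hjm'
    have hbit : boolLo (pairVal u (4*j)) = bitOf u (4*j) :=
      enc_boolLo (bitOf u (4*j+1)) (bitOf u (4*j))
    rw [← hbit, eps_eq] at hB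
    have hb : brel (blockState u j) (blockState v j) := ⟨hA, hB⟩
    have hne : blockState u j ≠ blockState v j := by
      intro he
      have hfst : pairVal u (4*j) = pairVal v (4*j) := congrArg Prod.fst he
      rcases hA with h' | h' <;> rw [← hfst] at h'
      · exact (by decide : ∀ a : ZMod 4, ¬ a = a + 1) _ h'
      · exact (by decide : ∀ a : ZMod 4, ¬ a = a - 1) _ h'
    have hf1 : ftab (blockState v j) ≤ ftab (blockState u j) + 1 :=
      ftabLip _ _ ⟨hne, Or.inl hb⟩
    have hf2 : ftab (blockState u j) ≤ ftab (blockState v j) + 1 :=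
      ftabLip _ _ ⟨hne.symm, Or.inr hb⟩
    have hother : ∀ i ∈ Finset.range m, i ≠ j-1 →
        ftab (blockState v (i+1)) = ftab (blockState u (i+1)) := by
      intro i _ hij
      congr 1
      unfold blockState
      have e : 4*(i+1)-2+1 = 4*(i+1)-1 := by omega
      rw [Prod.mk.injEq]
      constructor
      · exact (pairVal_congr (hagree _ (by omega)) (hagree _ (by omega))).symm
      · unfold pairVal
        rw [e, hagree _ (by omega), hagree _ (by omega)]
    have hi0 : j-1 ∈ Finset.range m := by simp; omega
    have ej : j-1+1 = j := by omega
    have hs1 : (∑ i ∈ Finset.range m, ftab (blockState v (i+1)))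
        ≤ (∑ i ∈ Finset.range m, ftab (blockState u (i+1))) + 1 := by
      refine sum_lip hi0 ?_ hother
      rw [ej]; exact hf1
    have hs2 : (∑ i ∈ Finset.range m, ftab (blockState u (i+1)))
        ≤ (∑ i ∈ Finset.range m, ftab (blockState v (i+1))) + 1 := by
      refine sum_lip hi0 ?_ ?_
      · rw [ej]; exact hf2
      · intro i hi hij; exact (hother i hi hij).symm
    have e0 : bitOf u 0 = bitOf v 0 := hagree 0 (Or.inl (by omega))
    have e1 : bitOf u 1 = bitOf v 1 := hagree 1 (Or.inl (by omega))
    unfold Phi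
    rw [e0, e1]
    omega

lemma phi_walk {n m : ℕ} (hm : n = 4*m+2) {u v : Fin n → Bool}
    (w : (BSQ n).Walk u v) : Phi m v ≤ Phi m u + w.length := by
  induction w with
  | nil => simp
  | cons h p ih =>
      rename_i a b c
      rw [BSQ, SimpleGraph.fromRel_adj] at h
      have hb : Phi m b ≤ Phi m a + 1 := by
        rcases h.2 with h' | h'
        · exact (phi_rel hm h').1
        · exact (phi_rel hm h').2
      rw [SimpleGraph.Walk.length_cons]
      omega

def zeroV (n : ℕ) : Fin n → Bool := fun _ => false

def starV (n : ℕ) : Fin n → Bool := fun i => decide ((i : ℕ) % 2 = 1) || decide ((i : ℕ) = 0)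

lemma bitOf_zero {n : ℕ} (k : ℕ) : bitOf (zeroV n) k = false := by
  unfold bitOf zeroV; split <;> rfl

lemma phi_zero {n : ℕ} (m : ℕ) : Phi m (zeroV n) = 0 := by
  have hb : ∀ j : ℕ, blockState (zeroV n) j = ((0 : ZMod 4), (0 : ZMod 4)) := by
    intro j
    unfold blockState pairVal
    rw [bitOf_zero, bitOf_zero, bitOf_zero, bitOf_zero]
    decide
  unfold Phi
  rw [bitOf_zero, bitOf_zero]
  simp [hb]
  exact Or.inr (by decide)

lemma bitOf_star {n : ℕ} (k : ℕ) (hk : k < n) :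
    bitOf (starV n) k = (decide (k % 2 = 1) || decide (k = 0)) := by
  unfold bitOf starV
  rw [dif_pos hk]

lemma phi_star {n m : ℕ} (hm : n = 4*m+2) : Phi m (starV n) = 2 + 4*m := by
  have hb : ∀ i ∈ Finset.range m, blockState (starV n) (i+1) = ((2 : ZMod 4), (2 : ZMod 4)) := by
    intro i hi
    rw [Finset.mem_range] at hi
    have e : 4*(i+1)-2+1 = 4*(i+1)-1 := by omega
    have b1 : bitOf (starV n) (4*(i+1)+1) = true := by
      rw [bitOf_star _ (by omega)]
      simp [show (4*(i+1)+1) % 2 = 1 from by omega]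
    have b0 : bitOf (starV n) (4*(i+1)) = false := by
      rw [bitOf_star _ (by omega)]
      simp [show (4*(i+1)) % 2 = 0 from by omega, show 4*(i+1) ≠ 0 from by omega]
    have b1' : bitOf (starV n) (4*(i+1)-1) = true := by
      rw [bitOf_star _ (by omega)]
      simp [show (4*(i+1)-1) % 2 = 1 from by omega]
    have b0' : bitOf (starV n) (4*(i+1)-2) = false := by
      rw [bitOf_star _ (by omega)]
      simp [show (4*(i+1)-2) % 2 = 0 from by omega, show 4*(i+1)-2 ≠ 0 from by omega]
    unfold blockState pairVal
    rw [e, b1, b0, b1', b0']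
    decide
  have l0 : bitOf (starV n) 0 = true := by
    rw [bitOf_star _ (by omega)]; simp
  have l1 : bitOf (starV n) 1 = true := by
    rw [bitOf_star _ (by omega)]; simp
  unfold Phi
  rw [l0, l1, Finset.sum_congr rfl (fun i hi => by rw [hb i hi, ftab22])]
  simp [Finset.sum_const, Finset.card_range]
  omega

end BSQaux

/-- For every `n ≡ 2 (mod 4)` (so `n ≥ 2`), the diameter of the balanced
shuffle-cube `BSQ_n` equals `n`. -/
theorem BSQ_diam (n : ℕ) (hn : n % 4 = 2) :
    (BSQ n).diam = n := by
  obtain ⟨m, hm⟩ : ∃ m, n = 4*m+2 := ⟨n/4, by omega⟩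
  have hupper : ∀ u v : Fin n → Bool, ∃ w : (BSQ n).Walk u v, w.length ≤ n := by
    intro u v
    obtain ⟨w, hw⟩ := BSQaux.upper hm m u v (fun j hj1 hjm hmj => absurd hjm (by omega))
    exact ⟨w, by omega⟩
  have hediam : (BSQ n).ediam ≤ (n : ℕ∞) := by
    refine SimpleGraph.ediam_le_of_edist_le ?_
    intro u v
    obtain ⟨w, hw⟩ := hupper u v
    exact (SimpleGraph.edist_le w).trans (by exact_mod_cast hw)
  have hnetop : (BSQ n).ediam ≠ ⊤ := ne_top_of_le_ne_top (by simp) hediam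
  have hdistlow : n ≤ (BSQ n).dist (BSQaux.zeroV n) (BSQaux.starV n) := by
    have hreach : (BSQ n).Reachable (BSQaux.zeroV n) (BSQaux.starV n) :=
      ⟨(hupper _ _).choose⟩
    obtain ⟨w, hw⟩ := hreach.exists_walk_length_eq_dist
    have hp := BSQaux.phi_walk hm w
    rw [BSQaux.phi_zero, BSQaux.phi_star hm] at hp
    omega
  refine le_antisymm ?_ ?_
  · obtain ⟨u, v, hd⟩ := SimpleGraph.exists_dist_eq_diam (G := BSQ n)
    rw [← hd]
    obtain ⟨w, hw⟩ := hupper u v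
    exact (SimpleGraph.dist_le w).trans hw
  · exact hdistlow.trans (SimpleGraph.dist_le_diam hnetop)
end

section
/- The 6-dimensional balanced shuffle-cube BSQ_6 contains a Hamiltonian cycle, i.e., a cycle passing through all 64 vertices of BSQ_6 exactly once. -/
-- auxiliary development

lemma bitOf_ge {n : ℕ} (u : Fin n → Bool) {k : ℕ} (h : n ≤ k) : bitOf u k = false :=
  dif_neg (by omega)

lemma lowRel6_iff (u v : Fin 6 → Bool) : lowRel u v ↔
    ∃ i < 2, bitOf u i ≠ bitOf v i ∧ ∀ k < 6, k ≠ i → bitOf u k = bitOf v k := by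
  constructor
  · rintro ⟨i, hi, hne, hall⟩
    exact ⟨i, hi, hne, fun k _ hk => hall k hk⟩
  · rintro ⟨i, hi, hne, hall⟩
    refine ⟨i, hi, hne, fun k hk => ?_⟩
    by_cases h6 : k < 6
    · exact hall k h6 hk
    · rw [bitOf_ge u (by omega), bitOf_ge v (by omega)]

instance lowRel6.dec (u v : Fin 6 → Bool) : Decidable (lowRel u v) :=
  decidable_of_iff _ (lowRel6_iff u v).symm

lemma blockAgree6_iff (u v : Fin 6 → Bool) : blockAgree u v 1 ↔
    ∀ k < 6, (k < 2 ∨ 5 < k) → bitOf u k = bitOf v k := by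
  constructor
  · intro h k _ hk
    exact h k (by simpa using hk)
  · intro h k hk
    by_cases h6 : k < 6
    · exact h k h6 (by simpa using hk)
    · rw [bitOf_ge u (by omega), bitOf_ge v (by omega)]

instance blockAgree6.dec (u v : Fin 6 → Bool) : Decidable (blockAgree u v 1) :=
  decidable_of_iff _ (blockAgree6_iff u v).symm

lemma bsqRel6_iff (u v : Fin 6 → Bool) : bsqRel u v ↔
    lowRel u v ∨ (blockAgree u v 1 ∧
      (pairVal v 4 = pairVal u 4 + 1 ∨ pairVal v 4 = pairVal u 4 - 1) ∧
      (pairVal v 2 = pairVal u 2 + (if bitOf u 4 then -1 else 1) ∨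
        pairVal v 2 = pairVal u 2)) := by
  constructor
  · rintro (h | ⟨j, hj1, hj2, h1, h2, h3⟩)
    · exact Or.inl h
    · have hj : j = 1 := by omega
      subst hj
      exact Or.inr ⟨h1, by simpa using h2, by simpa using h3⟩
  · rintro (h | ⟨h1, h2, h3⟩)
    · exact Or.inl h
    · exact Or.inr ⟨1, le_refl 1, by norm_num, h1, by simpa using h2, by simpa using h3⟩

instance bsqRel6.dec (u v : Fin 6 → Bool) : Decidable (bsqRel u v) :=
  decidable_of_iff _ (bsqRel6_iff u v).symm

instance : DecidableRel (BSQ 6).Adj := fun u v =>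
  decidable_of_iff _ (SimpleGraph.fromRel_adj bsqRel u v).symm

def V (m : ℕ) : Fin 6 → Bool := fun i => m.testBit i.val


open SimpleGraph in
def hamWalk : (BSQ 6).Walk (V 0) (V 0) :=
  Walk.cons (show (BSQ 6).Adj (V 0) (V 1) by decide)
  (Walk.cons (show (BSQ 6).Adj (V 1) (V 3) by decide)
  (Walk.cons (show (BSQ 6).Adj (V 3) (V 2) by decide)
  (Walk.cons (show (BSQ 6).Adj (V 2) (V 18) by decide)
  (Walk.cons (show (BSQ 6).Adj (V 18) (V 14) by decide)
  (Walk.cons (show (BSQ 6).Adj (V 14) (V 12) by decide)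
  (Walk.cons (show (BSQ 6).Adj (V 12) (V 13) by decide)
  (Walk.cons (show (BSQ 6).Adj (V 13) (V 15) by decide)
  (Walk.cons (show (BSQ 6).Adj (V 15) (V 19) by decide)
  (Walk.cons (show (BSQ 6).Adj (V 19) (V 17) by decide)
  (Walk.cons (show (BSQ 6).Adj (V 17) (V 16) by decide)
  (Walk.cons (show (BSQ 6).Adj (V 16) (V 32) by decide)
  (Walk.cons (show (BSQ 6).Adj (V 32) (V 20) by decide)
  (Walk.cons (show (BSQ 6).Adj (V 20) (V 4) by decide)
  (Walk.cons (show (BSQ 6).Adj (V 4) (V 5) by decide)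
  (Walk.cons (show (BSQ 6).Adj (V 5) (V 7) by decide)
  (Walk.cons (show (BSQ 6).Adj (V 7) (V 6) by decide)
  (Walk.cons (show (BSQ 6).Adj (V 6) (V 22) by decide)
  (Walk.cons (show (BSQ 6).Adj (V 22) (V 23) by decide)
  (Walk.cons (show (BSQ 6).Adj (V 23) (V 21) by decide)
  (Walk.cons (show (BSQ 6).Adj (V 21) (V 33) by decide)
  (Walk.cons (show (BSQ 6).Adj (V 33) (V 35) by decide)
  (Walk.cons (show (BSQ 6).Adj (V 35) (V 34) by decide)
  (Walk.cons (show (BSQ 6).Adj (V 34) (V 50) by decide)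
  (Walk.cons (show (BSQ 6).Adj (V 50) (V 46) by decide)
  (Walk.cons (show (BSQ 6).Adj (V 46) (V 30) by decide)
  (Walk.cons (show (BSQ 6).Adj (V 30) (V 10) by decide)
  (Walk.cons (show (BSQ 6).Adj (V 10) (V 8) by decide)
  (Walk.cons (show (BSQ 6).Adj (V 8) (V 9) by decide)
  (Walk.cons (show (BSQ 6).Adj (V 9) (V 11) by decide)
  (Walk.cons (show (BSQ 6).Adj (V 11) (V 27) by decide)
  (Walk.cons (show (BSQ 6).Adj (V 27) (V 25) by decide)
  (Walk.cons (show (BSQ 6).Adj (V 25) (V 24) by decide)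
  (Walk.cons (show (BSQ 6).Adj (V 24) (V 26) by decide)
  (Walk.cons (show (BSQ 6).Adj (V 26) (V 38) by decide)
  (Walk.cons (show (BSQ 6).Adj (V 38) (V 36) by decide)
  (Walk.cons (show (BSQ 6).Adj (V 36) (V 37) by decide)
  (Walk.cons (show (BSQ 6).Adj (V 37) (V 53) by decide)
  (Walk.cons (show (BSQ 6).Adj (V 53) (V 52) by decide)
  (Walk.cons (show (BSQ 6).Adj (V 52) (V 54) by decide)
  (Walk.cons (show (BSQ 6).Adj (V 54) (V 55) by decide)
  (Walk.cons (show (BSQ 6).Adj (V 55) (V 39) by decide)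
  (Walk.cons (show (BSQ 6).Adj (V 39) (V 59) by decide)
  (Walk.cons (show (BSQ 6).Adj (V 59) (V 43) by decide)
  (Walk.cons (show (BSQ 6).Adj (V 43) (V 31) by decide)
  (Walk.cons (show (BSQ 6).Adj (V 31) (V 29) by decide)
  (Walk.cons (show (BSQ 6).Adj (V 29) (V 28) by decide)
  (Walk.cons (show (BSQ 6).Adj (V 28) (V 40) by decide)
  (Walk.cons (show (BSQ 6).Adj (V 40) (V 41) by decide)
  (Walk.cons (show (BSQ 6).Adj (V 41) (V 57) by decide)
  (Walk.cons (show (BSQ 6).Adj (V 57) (V 56) by decide)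
  (Walk.cons (show (BSQ 6).Adj (V 56) (V 58) by decide)
  (Walk.cons (show (BSQ 6).Adj (V 58) (V 42) by decide)
  (Walk.cons (show (BSQ 6).Adj (V 42) (V 62) by decide)
  (Walk.cons (show (BSQ 6).Adj (V 62) (V 60) by decide)
  (Walk.cons (show (BSQ 6).Adj (V 60) (V 44) by decide)
  (Walk.cons (show (BSQ 6).Adj (V 44) (V 45) by decide)
  (Walk.cons (show (BSQ 6).Adj (V 45) (V 61) by decide)
  (Walk.cons (show (BSQ 6).Adj (V 61) (V 63) by decide)
  (Walk.cons (show (BSQ 6).Adj (V 63) (V 47) by decide)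
  (Walk.cons (show (BSQ 6).Adj (V 47) (V 51) by decide)
  (Walk.cons (show (BSQ 6).Adj (V 51) (V 49) by decide)
  (Walk.cons (show (BSQ 6).Adj (V 49) (V 48) by decide)
  (Walk.cons (show (BSQ 6).Adj (V 48) (V 0) by decide)
  (Walk.nil))))))))))))))))))))))))))))))))))))))))))))))))))))))))))))))))

/-- The 6-dimensional balanced shuffle-cube `BSQ_6` contains a
Hamiltonian cycle. -/
theorem BSQ6_hamiltonian :
    ∃ (a : Fin 6 → Bool) (p : (BSQ 6).Walk a a), p.IsHamiltonianCycle := by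
  refine ⟨V 0, hamWalk,
    (SimpleGraph.Walk.isHamiltonianCycle_iff_isCycle_and_support_count_tail_eq_one).mpr
      ⟨?_, by decide⟩⟩
  unfold hamWalk
  rw [SimpleGraph.Walk.cons_isCycle_iff]
  exact ⟨by rw [SimpleGraph.Walk.isPath_def]; decide, by decide⟩
end
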